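/- arXiv:2601.22867 — 4 statements merged into one kernel-verified Lean document; each statement's English description precedes it below -/
import Mathlib

section
/- (Right-eigenpair correspondence, Lemma 1 / Prop. 1 of Williams et al.) Let λ ∈ ℂ with λ ≠ 0 and η ∈ ℂ^R. Then (λ, η) is a right eigenpair of K̂ (i.e., K̂η = λη and η ≠ 0) if and only if (λ, Vη) is a right eigenpair of K (i.e., K(Vη) = λ(Vη) and Vη ≠ 0). -/
open Matrix

theorem kdmd_right_eigenpair_correspondence (M L R : ℕ)
    (ΨX ΨY : Matrix (Fin M) (Fin L) ℂ)
    (U : Matrix (Fin M) (Fin R) ℂ) (V : Matrix (Fin L) (Fin R) ℂ)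
    (σ : Fin R → ℝ) (hσ : ∀ i, 0 < σ i)
    (D : Matrix (Fin R) (Fin R) ℂ) (hD : D = Matrix.diagonal fun i => (σ i : ℂ))
    (hU : Uᴴ * U = 1) (hV : Vᴴ * V = 1)
    (hSVD : ΨX = U * D * Vᴴ)
    (G A : Matrix (Fin M) (Fin M) ℂ)
    (hG : G = ΨX * ΨXᴴ) (hA : A = ΨY * ΨXᴴ)
    (K : Matrix (Fin L) (Fin L) ℂ) (hK : K = V * D⁻¹ * Uᴴ * ΨY)
    (Khat : Matrix (Fin R) (Fin R) ℂ) (hKhat : Khat = D⁻¹ * Uᴴ * A * U * D⁻¹)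
    (lam : ℂ) (hlam : lam ≠ 0) (η : Fin R → ℂ) :
    (Khat.mulVec η = lam • η ∧ η ≠ 0) ↔
      (K.mulVec (V.mulVec η) = lam • V.mulVec η ∧ V.mulVec η ≠ 0) := by
  have hDH : Dᴴ = D := by
    subst hD
    simp [Matrix.diagonal_conjTranspose, Function.comp]
  have hDdet : D.det ≠ 0 := by
    rw [hD, Matrix.det_diagonal]
    refine Finset.prod_ne_zero_iff.mpr fun i _ => ?_
    exact_mod_cast (hσ i).ne'
  have hDinv : D * D⁻¹ = 1 :=
    Matrix.mul_nonsing_inv _ (isUnit_iff_ne_zero.mpr hDdet)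
  have key : Khat = D⁻¹ * Uᴴ * ΨY * V := by
    rw [hKhat, hA, hSVD, conjTranspose_mul, conjTranspose_mul,
      conjTranspose_conjTranspose, hDH]
    calc D⁻¹ * Uᴴ * (ΨY * (V * (D * Uᴴ))) * U * D⁻¹
        = D⁻¹ * Uᴴ * ΨY * V * (D * ((Uᴴ * U) * D⁻¹)) := by
          simp only [Matrix.mul_assoc]
      _ = D⁻¹ * Uᴴ * ΨY * V := by rw [hU, Matrix.one_mul, hDinv, Matrix.mul_one]
  have hKV : K * V = V * Khat := by
    rw [hK, key]; simp only [Matrix.mul_assoc]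
  have hVinj : ∀ x : Fin R → ℂ, V.mulVec x = 0 → x = 0 := by
    intro x h
    have := congrArg Vᴴ.mulVec h
    simpa [Matrix.mulVec_mulVec, hV] using this
  constructor
  · rintro ⟨h1, h2⟩
    refine ⟨?_, fun h => h2 (hVinj η h)⟩
    calc K.mulVec (V.mulVec η) = (K * V).mulVec η := Matrix.mulVec_mulVec ..
      _ = (V * Khat).mulVec η := by rw [hKV]
      _ = V.mulVec (Khat.mulVec η) := (Matrix.mulVec_mulVec ..).symm
      _ = V.mulVec (lam • η) := by rw [h1]
      _ = lam • V.mulVec η := Matrix.mulVec_smul ..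
  · rintro ⟨h1, h2⟩
    have hη : η ≠ 0 := fun h => h2 (by simp [h])
    refine ⟨?_, hη⟩
    have heq : V.mulVec (Khat.mulVec η) = V.mulVec (lam • η) := by
      calc V.mulVec (Khat.mulVec η) = (V * Khat).mulVec η := Matrix.mulVec_mulVec ..
        _ = (K * V).mulVec η := by rw [hKV]
        _ = K.mulVec (V.mulVec η) := (Matrix.mulVec_mulVec ..).symm
        _ = lam • V.mulVec η := h1
        _ = V.mulVec (lam • η) := (Matrix.mulVec_smul ..).symm
    have := hVinj (Khat.mulVec η - lam • η) (by
      rw [Matrix.mulVec_sub, heq, sub_self])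
    exact sub_eq_zero.mp this
end

section
/- A nonzero complex number λ is an eigenvalue of K̂ if and only if λ is an eigenvalue of K. (For the backward direction note that if Kx = λx with λ ≠ 0 and x ≠ 0, then x ∈ range(K) ⊆ range(V), so x = Vη for η = V*x ≠ 0 and K̂η = λη.) -/
open Matrix

theorem kdmd_eigenvalue_correspondence (M L R : ℕ)
    (ΨX ΨY : Matrix (Fin M) (Fin L) ℂ)
    (U : Matrix (Fin M) (Fin R) ℂ) (V : Matrix (Fin L) (Fin R) ℂ)
    (σ : Fin R → ℝ) (hσ : ∀ i, 0 < σ i)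
    (D : Matrix (Fin R) (Fin R) ℂ) (hD : D = Matrix.diagonal fun i => (σ i : ℂ))
    (hU : Uᴴ * U = 1) (hV : Vᴴ * V = 1)
    (hSVD : ΨX = U * D * Vᴴ)
    (G A : Matrix (Fin M) (Fin M) ℂ)
    (hG : G = ΨX * ΨXᴴ) (hA : A = ΨY * ΨXᴴ)
    (K : Matrix (Fin L) (Fin L) ℂ) (hK : K = V * D⁻¹ * Uᴴ * ΨY)
    (Khat : Matrix (Fin R) (Fin R) ℂ) (hKhat : Khat = D⁻¹ * Uᴴ * A * U * D⁻¹)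
    (lam : ℂ) (hlam : lam ≠ 0) :
    (∃ η : Fin R → ℂ, η ≠ 0 ∧ Khat.mulVec η = lam • η) ↔
      (∃ x : Fin L → ℂ, x ≠ 0 ∧ K.mulVec x = lam • x) := by
  -- D is invertible
  have hdet : IsUnit D.det := by
    rw [hD, Matrix.det_diagonal]
    refine isUnit_iff_ne_zero.mpr (Finset.prod_ne_zero_iff.mpr fun i _ => ?_)
    exact_mod_cast (hσ i).ne'
  have hDH : Dᴴ = D := by
    rw [hD]
    ext i j
    simp only [Matrix.conjTranspose_apply, Matrix.diagonal_apply, eq_comm,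
      apply_ite (starRingEnd ℂ), Complex.conj_ofReal, map_zero]
    split_ifs with h <;> simp [h, Complex.star_def, Complex.conj_ofReal]

  have hXH : ΨXᴴ = V * D * Uᴴ := by
    rw [hSVD]
    simp [Matrix.conjTranspose_mul, hDH, Matrix.mul_assoc]
  set W : Matrix (Fin R) (Fin L) ℂ := D⁻¹ * Uᴴ * ΨY with hW
  have hKW : K = V * W := by rw [hK, hW]; simp only [Matrix.mul_assoc]
  have hKhatW : Khat = W * V := by
    rw [hKhat, hA, hXH, hW]
    have h1 : D * D⁻¹ = 1 := Matrix.mul_nonsing_inv D hdet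
    calc D⁻¹ * Uᴴ * (ΨY * (V * D * Uᴴ)) * U * D⁻¹
        = D⁻¹ * Uᴴ * ΨY * V * (D * ((Uᴴ * U) * D⁻¹)) := by
          simp only [Matrix.mul_assoc]
      _ = D⁻¹ * Uᴴ * ΨY * V := by
          rw [hU, Matrix.one_mul, h1, Matrix.mul_one]
  constructor
  · rintro ⟨η, hη, hηe⟩
    refine ⟨V.mulVec η, ?_, ?_⟩
    · intro h0
      apply hη
      have : (Vᴴ * V).mulVec η = Vᴴ.mulVec (V.mulVec η) := by
        rw [Matrix.mulVec_mulVec]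
      rw [hV, Matrix.one_mulVec] at this
      rw [this, h0, Matrix.mulVec_zero]
    · rw [hKW]
      have h2 : (V * W) *ᵥ (V *ᵥ η) = V *ᵥ (Khat *ᵥ η) := by
        rw [hKhatW, Matrix.mulVec_mulVec, Matrix.mulVec_mulVec, Matrix.mul_assoc]
      rw [h2, hηe, Matrix.mulVec_smul]
  · rintro ⟨x, hx, hxe⟩
    refine ⟨W.mulVec x, ?_, ?_⟩
    · intro h0
      have : K.mulVec x = 0 := by
        rw [hKW, ← Matrix.mulVec_mulVec, h0, Matrix.mulVec_zero]
      rw [hxe] at this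
      exact hx (by simpa [hlam] using this)
    · rw [hKhatW]
      have h2 : (W * V) *ᵥ (W *ᵥ x) = W *ᵥ (K *ᵥ x) := by
        rw [hKW, Matrix.mulVec_mulVec, Matrix.mulVec_mulVec, Matrix.mul_assoc]
      rw [h2, hxe, Matrix.mulVec_smul]
end

section
/- (Left-eigenpair correspondence, Lemma 1 / Prop. 1 of Williams et al.) Assume in addition that every row of Ψ_Y lies in the row space of Ψ_X, i.e., Ψ_Y V V* = Ψ_Y. Let λ ∈ ℂ with λ ≠ 0 and w ∈ ℂ^R. Then (λ, w) is a left eigenpair of K̂ (i.e., K̂*w = λ̄w and w ≠ 0) if and only if (λ, Vw) is a left eigenpair of K (i.e., K*(Vw) = λ̄(Vw) and Vw ≠ 0). Moreover, the implication from left eigenpair of K to left eigenpair of K̂ holds even without the row-space assumption. -/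
open Matrix

theorem kdmd_left_eigenpair_correspondence (M L R : ℕ)
    (ΨX ΨY : Matrix (Fin M) (Fin L) ℂ)
    (U : Matrix (Fin M) (Fin R) ℂ) (V : Matrix (Fin L) (Fin R) ℂ)
    (σ : Fin R → ℝ) (hσ : ∀ i, 0 < σ i)
    (D : Matrix (Fin R) (Fin R) ℂ) (hD : D = Matrix.diagonal fun i => (σ i : ℂ))
    (hU : Uᴴ * U = 1) (hV : Vᴴ * V = 1)
    (hSVD : ΨX = U * D * Vᴴ)
    (G A : Matrix (Fin M) (Fin M) ℂ)
    (hG : G = ΨX * ΨXᴴ) (hA : A = ΨY * ΨXᴴ)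
    (K : Matrix (Fin L) (Fin L) ℂ) (hK : K = V * D⁻¹ * Uᴴ * ΨY)
    (Khat : Matrix (Fin R) (Fin R) ℂ) (hKhat : Khat = D⁻¹ * Uᴴ * A * U * D⁻¹)
    (lam : ℂ) (hlam : lam ≠ 0) (w : Fin R → ℂ) :
    (ΨY * V * Vᴴ = ΨY →
      ((Khatᴴ.mulVec w = (starRingEnd ℂ lam) • w ∧ w ≠ 0) ↔
        (Kᴴ.mulVec (V.mulVec w) = (starRingEnd ℂ lam) • V.mulVec w ∧ V.mulVec w ≠ 0))) ∧
    ((Kᴴ.mulVec (V.mulVec w) = (starRingEnd ℂ lam) • V.mulVec w ∧ V.mulVec w ≠ 0) →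
      (Khatᴴ.mulVec w = (starRingEnd ℂ lam) • w ∧ w ≠ 0)) := by
  set c := (starRingEnd ℂ) lam with hc
  -- D is Hermitian
  have hDH : Dᴴ = D := by
    rw [hD, Matrix.diagonal_conjTranspose]
    ext i j
    simp [Matrix.diagonal_apply, Pi.star_apply, Complex.conj_ofReal]
  -- D is invertible
  have hDdet : IsUnit D.det := by
    rw [hD, Matrix.det_diagonal, isUnit_iff_ne_zero]
    exact Finset.prod_ne_zero_iff.mpr fun i _ => by
      exact_mod_cast (hσ i).ne'
  have hDD : D * D⁻¹ = 1 := Matrix.mul_nonsing_inv D hDdet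
  -- the key matrix C
  set C : Matrix (Fin R) (Fin L) ℂ := D⁻¹ * Uᴴ * ΨY with hC
  have hKC : K = V * C := by rw [hK, hC]; simp only [Matrix.mul_assoc]
  have hXH : ΨXᴴ = V * D * Uᴴ := by
    rw [hSVD]
    simp only [Matrix.conjTranspose_mul, Matrix.conjTranspose_conjTranspose, hDH,
      Matrix.mul_assoc]
  have hKhatC : Khat = C * V := by
    rw [hKhat, hA, hXH, hC]
    simp only [Matrix.mul_assoc]
    rw [← Matrix.mul_assoc Uᴴ U D⁻¹, hU, Matrix.one_mul, hDD, Matrix.mul_one]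
  have hKH : Kᴴ = Cᴴ * Vᴴ := by rw [hKC, Matrix.conjTranspose_mul]
  have hKhatH : Khatᴴ = Vᴴ * Cᴴ := by rw [hKhatC, Matrix.conjTranspose_mul]
  -- Vᴴ (V x) = x
  have hVVx : ∀ x : Fin R → ℂ, Vᴴ.mulVec (V.mulVec x) = x := fun x => by
    rw [Matrix.mulVec_mulVec, hV, Matrix.one_mulVec]
  -- V w ≠ 0 ↔ w ≠ 0
  have hVw0 : V.mulVec w ≠ 0 ↔ w ≠ 0 := by
    constructor
    · intro h hw; exact h (by rw [hw, Matrix.mulVec_zero])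
    · intro h hVw
      apply h
      have := hVVx w
      rw [hVw, Matrix.mulVec_zero] at this
      exact this.symm
  -- backward direction (always)
  have hback : (Kᴴ.mulVec (V.mulVec w) = c • V.mulVec w ∧ V.mulVec w ≠ 0) →
      (Khatᴴ.mulVec w = c • w ∧ w ≠ 0) := by
    rintro ⟨he, hne⟩
    refine ⟨?_, hVw0.mp hne⟩
    have hCw : Cᴴ.mulVec w = c • V.mulVec w := by
      have : Cᴴ.mulVec w = Kᴴ.mulVec (V.mulVec w) := by
        rw [hKH, ← Matrix.mulVec_mulVec, hVVx]
      rw [this, he]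
    rw [hKhatH, ← Matrix.mulVec_mulVec, hCw, Matrix.mulVec_smul, hVVx]
  refine ⟨fun hrow => ⟨?_, hback⟩, hback⟩
  -- forward direction (uses the row-space assumption)
  rintro ⟨he, hw⟩
  refine ⟨?_, hVw0.mpr hw⟩
  have hCVV : C * V * Vᴴ = C := by
    rw [hC]
    simp only [Matrix.mul_assoc]
    rw [← Matrix.mul_assoc ΨY V Vᴴ, hrow]
  have hCHeq : Cᴴ = V * Vᴴ * Cᴴ := by
    calc Cᴴ = (C * V * Vᴴ)ᴴ := by rw [hCVV]
    _ = V * Vᴴ * Cᴴ := by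
        simp only [Matrix.conjTranspose_mul, Matrix.conjTranspose_conjTranspose,
          Matrix.mul_assoc]
  have hCw : Cᴴ.mulVec w = c • V.mulVec w := by
    conv_lhs => rw [hCHeq]
    have : (V * Vᴴ * Cᴴ).mulVec w = V.mulVec (Khatᴴ.mulVec w) := by
      rw [hKhatH]
      simp only [← Matrix.mulVec_mulVec, Matrix.mul_assoc]
    rw [this, he, Matrix.mulVec_smul]
  rw [hKH, ← Matrix.mulVec_mulVec, hVVx, hCw]
end

section
/- (KDMD data-driven residual formula) For every w ∈ ℂ^R and every λ ∈ ℂ, Ψ_X (K*(Vw) − λ̄ (Vw)) = A* U Σ⁻¹ w − λ̄ G U Σ⁻¹ w. Consequently the data-driven residual r = ‖A* U Σ⁻¹ w − λ̄ G U Σ⁻¹ w‖₂ equals ‖Ψ_X (K* − λ̄ I)(Vw)‖₂. -/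
open Matrix

theorem kdmd_data_driven_residual (M L R : ℕ)
    (ΨX ΨY : Matrix (Fin M) (Fin L) ℂ)
    (U : Matrix (Fin M) (Fin R) ℂ) (V : Matrix (Fin L) (Fin R) ℂ)
    (σ : Fin R → ℝ) (hσ : ∀ i, 0 < σ i)
    (D : Matrix (Fin R) (Fin R) ℂ) (hD : D = Matrix.diagonal fun i => (σ i : ℂ))
    (hU : Uᴴ * U = 1) (hV : Vᴴ * V = 1)
    (hSVD : ΨX = U * D * Vᴴ)
    (G A : Matrix (Fin M) (Fin M) ℂ)
    (hG : G = ΨX * ΨXᴴ) (hA : A = ΨY * ΨXᴴ)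
    (K : Matrix (Fin L) (Fin L) ℂ) (hK : K = V * D⁻¹ * Uᴴ * ΨY)
    (Khat : Matrix (Fin R) (Fin R) ℂ) (hKhat : Khat = D⁻¹ * Uᴴ * A * U * D⁻¹)
    (w : Fin R → ℂ) (lam : ℂ) :
    ΨX.mulVec (Kᴴ.mulVec (V.mulVec w) - (starRingEnd ℂ lam) • V.mulVec w) =
        (Aᴴ * U * D⁻¹).mulVec w - (starRingEnd ℂ lam) • (G * U * D⁻¹).mulVec w ∧
      ‖(WithLp.equiv 2 (Fin M → ℂ)).symm
          ((Aᴴ * U * D⁻¹).mulVec w - (starRingEnd ℂ lam) • (G * U * D⁻¹).mulVec w)‖ =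
        ‖(WithLp.equiv 2 (Fin M → ℂ)).symm
          (ΨX.mulVec ((Kᴴ - (starRingEnd ℂ lam) • 1).mulVec (V.mulVec w)))‖ := by
  have hσne : ∀ i, (σ i : ℂ) ≠ 0 := fun i => by
    simpa using (hσ i).ne'
  have hDH : Dᴴ = D := by
    subst hD
    ext i j
    by_cases h : i = j
    · subst h; simp [Matrix.conjTranspose_apply, Matrix.diagonal_apply, Complex.conj_ofReal]
    · simp [Matrix.conjTranspose_apply, Matrix.diagonal_apply, h, Ne.symm h]
  set E : Matrix (Fin R) (Fin R) ℂ := Matrix.diagonal fun i => ((σ i : ℂ))⁻¹ with hE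
  have hDE : D * E = 1 := by
    rw [hD, hE, Matrix.diagonal_mul_diagonal]
    have : (fun i => (σ i : ℂ) * ((σ i : ℂ))⁻¹) = fun _ => (1 : ℂ) :=
      funext fun i => mul_inv_cancel₀ (hσne i)
    rw [this, Matrix.diagonal_one]
  have hED : E * D = 1 := by
    rw [hD, hE, Matrix.diagonal_mul_diagonal]
    have : (fun i => ((σ i : ℂ))⁻¹ * (σ i : ℂ)) = fun _ => (1 : ℂ) :=
      funext fun i => inv_mul_cancel₀ (hσne i)
    rw [this, Matrix.diagonal_one]
  have hDinv : D⁻¹ = E := Matrix.inv_eq_right_inv hDE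
  have hDDinv : D * D⁻¹ = 1 := by rw [hDinv]; exact hDE
  have hDinvH : (D⁻¹)ᴴ = D⁻¹ := by
    rw [hDinv, hE]
    ext i j
    by_cases h : i = j
    · subst h; simp [Matrix.conjTranspose_apply, Matrix.diagonal_apply, Complex.conj_ofReal]
    · simp [Matrix.conjTranspose_apply, Matrix.diagonal_apply, h, Ne.symm h]
  -- Kᴴ expression
  have hKH : Kᴴ = ΨYᴴ * U * D⁻¹ * Vᴴ := by
    rw [hK]
    simp only [Matrix.conjTranspose_mul, Matrix.conjTranspose_conjTranspose, hDinvH,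
      Matrix.mul_assoc]
  -- identity 1 : ΨX * Kᴴ * V = Aᴴ * U * D⁻¹
  have h1 : ΨX * Kᴴ * V = Aᴴ * U * D⁻¹ := by
    rw [hKH, hA]
    have hstep : ΨX * (ΨYᴴ * U * D⁻¹ * Vᴴ) * V = ΨX * ΨYᴴ * U * D⁻¹ * (Vᴴ * V) := by
      simp only [Matrix.mul_assoc]
    rw [hstep, hV, Matrix.mul_one]
    simp only [Matrix.conjTranspose_mul, Matrix.conjTranspose_conjTranspose, Matrix.mul_assoc]
  -- identity 2 : ΨX * V = G * U * D⁻¹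
  have h2 : ΨX * V = G * U * D⁻¹ := by
    have hXV : ΨX * V = U * D := by
      rw [hSVD, Matrix.mul_assoc, hV, Matrix.mul_one]
    have hXH : ΨXᴴ = V * D * Uᴴ := by
      rw [hSVD]
      simp only [Matrix.conjTranspose_mul, Matrix.conjTranspose_conjTranspose, hDH,
        Matrix.mul_assoc]
    have : G * U * D⁻¹ = U * D := by
      rw [hG, hXH, hSVD]
      have hstep : U * D * Vᴴ * (V * D * Uᴴ) * U * D⁻¹
          = U * D * (Vᴴ * V) * (D * (Uᴴ * U) * D⁻¹) := by
        simp only [Matrix.mul_assoc]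
      rw [hstep, hV, hU]
      simp only [Matrix.mul_one]
      rw [Matrix.mul_assoc, hDDinv, Matrix.mul_one]
    rw [hXV, this]
  have key : ΨX.mulVec (Kᴴ.mulVec (V.mulVec w) - (starRingEnd ℂ lam) • V.mulVec w) =
      (Aᴴ * U * D⁻¹).mulVec w - (starRingEnd ℂ lam) • (G * U * D⁻¹).mulVec w := by
    rw [Matrix.mulVec_sub, Matrix.mulVec_smul]
    rw [Matrix.mulVec_mulVec, Matrix.mulVec_mulVec, Matrix.mulVec_mulVec]
    rw [h1, h2]
  refine ⟨key, ?_⟩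
  have hsub : (Kᴴ - (starRingEnd ℂ lam) • 1).mulVec (V.mulVec w) =
      Kᴴ.mulVec (V.mulVec w) - (starRingEnd ℂ lam) • V.mulVec w := by
    rw [Matrix.sub_mulVec, Matrix.smul_mulVec, Matrix.one_mulVec]
  rw [hsub, key]
end
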